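/- Let A_1, A_2, A_3, A_4 ⊆ F_2^n be nonempty and coherently δ-flat for some 0 < δ < 1/2, meaning that for every ξ ∈ F_2^n either ξ ∈ Spec_{9/10}(A_i) for all i, or ξ ∉ Spec_δ(A_i) for all i. Then Λ := Spec_{9/10}(A_1) ∩ Spec_{9/10}(A_2) ∩ Spec_{9/10}(A_3) ∩ Spec_{9/10}(A_4) is a linear subspace of F_2^n. -/

import Mathlib

open Finset

/-- Fourier transform of the indicator of A ⊆ 𝔽₂ⁿ. -/
noncomputable def ftA {n : ℕ} (A : Finset (Fin n → ZMod 2)) (ξ : Fin n → ZMod 2) : ℝ :=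
  ((2 : ℝ) ^ n)⁻¹ * ∑ x ∈ A, (-1 : ℝ) ^ (∑ i, ξ i * x i : ZMod 2).val

/-- Spec_α(A) := {ξ : |1̂_A(ξ)| ≥ α|A|/2ⁿ}. -/
noncomputable def Spec {n : ℕ} (α : ℝ) (A : Finset (Fin n → ZMod 2)) :
    Set (Fin n → ZMod 2) :=
  {ξ | α * A.card / 2 ^ n ≤ |ftA A ξ|}

/-!
If `ξ, ξ' ∈ Λ`, the triangle inequality for spectra puts `ξ + ξ'` in `Spec_{8/10}(A_i)`,
hence in `Spec_δ(A_i)` as `δ < 1/2`; coherent flatness then forces `ξ + ξ' ∈ Λ`.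
Since `0 ∈ Λ` and `-ξ = ξ` in `𝔽₂ⁿ`, `Λ` is an additive subgroup, i.e. an `𝔽₂`-subspace.
The triangle inequality is `|Σ_A χ_ξ| + |Σ_A χ_ξ'| - |A| ≤ |Σ_A χ_ξ χ_ξ'|` for the
characters `χ_ξ = walsh ξ`, and it holds for any real functions bounded by `1`.
-/

lemma exists_abs_eq_one_mul_eq_abs (a : ℝ) : ∃ ε : ℝ, |ε| = 1 ∧ ε * a = |a| :=
  (abs_choice a).elim (fun h => ⟨1, by simp, by simp [h]⟩) (fun h => ⟨-1, by simp, by simp [h]⟩)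

lemma add_sub_one_le_mul {u v : ℝ} (hu : |u| ≤ 1) (hv : |v| ≤ 1) : u + v - 1 ≤ u * v := by
  nlinarith [abs_le.mp hu, abs_le.mp hv]

-- Sum `(1 - ε f)(1 - ε' g) ≥ 0` over `s`, where `ε, ε'` are the signs of the two sums.
lemma abs_sum_add_abs_sum_sub_card_le {ι : Type*} (s : Finset ι) {f g : ι → ℝ}
    (hf : ∀ x ∈ s, |f x| ≤ 1) (hg : ∀ x ∈ s, |g x| ≤ 1) :
    |∑ x ∈ s, f x| + |∑ x ∈ s, g x| - #s ≤ |∑ x ∈ s, f x * g x| := by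
  obtain ⟨ε, hε, hεf⟩ := exists_abs_eq_one_mul_eq_abs (∑ x ∈ s, f x)
  obtain ⟨ε', hε', hεg⟩ := exists_abs_eq_one_mul_eq_abs (∑ x ∈ s, g x)
  have scale {c y : ℝ} (hc : |c| = 1) (hy : |y| ≤ 1) : |c * y| ≤ 1 := by
    rwa [abs_mul, hc, one_mul]
  calc |∑ x ∈ s, f x| + |∑ x ∈ s, g x| - #s
      = ∑ x ∈ s, (ε * f x + ε' * g x - 1) := by
        rw [← hεf, ← hεg, sum_sub_distrib, sum_add_distrib, mul_sum, mul_sum, sum_const,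
          nsmul_one]
    _ ≤ ∑ x ∈ s, ε * f x * (ε' * g x) :=
        sum_le_sum fun x hx => add_sub_one_le_mul (scale hε (hf x hx)) (scale hε' (hg x hx))
    _ = ε * ε' * ∑ x ∈ s, f x * g x := by
        rw [mul_sum]
        exact sum_congr rfl fun x _ => by ring
    _ ≤ |∑ x ∈ s, f x * g x| := by
        simpa [abs_mul, hε, hε'] using le_abs_self (ε * ε' * ∑ x ∈ s, f x * g x)

section Walsh

variable {n : ℕ}

noncomputable def walsh (ξ x : Fin n → ZMod 2) : ℝ :=
  (-1 : ℝ) ^ (∑ i, ξ i * x i : ZMod 2).val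

lemma abs_walsh (ξ x : Fin n → ZMod 2) : |walsh ξ x| = 1 := by
  simp [walsh]

lemma walsh_zero_left (x : Fin n → ZMod 2) : walsh 0 x = 1 := by
  simp [walsh]

lemma walsh_add_left (ξ ξ' x : Fin n → ZMod 2) :
    walsh (ξ + ξ') x = walsh ξ x * walsh ξ' x := by
  simp only [walsh, Pi.add_apply, add_mul, sum_add_distrib]
  rw [ZMod.val_add, ← pow_add, ← neg_one_pow_eq_pow_mod_two]

lemma mem_Spec_iff {α : ℝ} {A : Finset (Fin n → ZMod 2)} {ξ : Fin n → ZMod 2} :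
    ξ ∈ Spec α A ↔ α * #A ≤ |∑ x ∈ A, walsh ξ x| := by
  rw [Spec, Set.mem_ofPred_eq, ftA, abs_mul, abs_of_pos (by positivity), ← div_eq_inv_mul,
    div_le_div_iff_of_pos_right (by positivity)]
  rfl

lemma Spec_anti {α β : ℝ} (h : α ≤ β) (A : Finset (Fin n → ZMod 2)) : Spec β A ⊆ Spec α A :=
  fun _ hξ => mem_Spec_iff.2 <| (mul_le_mul_of_nonneg_right h (#A).cast_nonneg).trans
    (mem_Spec_iff.1 hξ)

lemma zero_mem_Spec {α : ℝ} (hα : α ≤ 1) (A : Finset (Fin n → ZMod 2)) : 0 ∈ Spec α A := by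
  rw [mem_Spec_iff]
  simpa [walsh_zero_left] using mul_le_of_le_one_left (#A).cast_nonneg hα

lemma add_mem_Spec {α β : ℝ} {A : Finset (Fin n → ZMod 2)} {ξ ξ' : Fin n → ZMod 2}
    (hξ : ξ ∈ Spec α A) (hξ' : ξ' ∈ Spec β A) : ξ + ξ' ∈ Spec (α + β - 1) A := by
  rw [mem_Spec_iff] at *
  calc (α + β - 1) * #A = α * #A + β * #A - #A := by ring
    _ ≤ |∑ x ∈ A, walsh ξ x| + |∑ x ∈ A, walsh ξ' x| - #A := by gcongr
    _ ≤ |∑ x ∈ A, walsh (ξ + ξ') x| := by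
      simpa only [walsh_add_left] using abs_sum_add_abs_sum_sub_card_le A
        (fun x _ => (abs_walsh ξ x).le) (fun x _ => (abs_walsh ξ' x).le)

end Walsh

theorem stmt_12 {n : ℕ} (A : Fin 4 → Finset (Fin n → ZMod 2))
    {δ : ℝ} (hδ1 : δ < 1 / 2)
    (hflat : ∀ ξ : Fin n → ZMod 2,
      (∀ i, ξ ∈ Spec (9 / 10) (A i)) ∨ (∀ i, ξ ∉ Spec δ (A i))) :
    ∃ Λ : Submodule (ZMod 2) (Fin n → ZMod 2),
      (Λ : Set (Fin n → ZMod 2)) = ⋂ i, Spec (9 / 10) (A i) := by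
  have add_mem {ξ ξ'} (hξ : ξ ∈ ⋂ i, Spec (9 / 10) (A i)) (hξ' : ξ' ∈ ⋂ i, Spec (9 / 10) (A i)) :
      ξ + ξ' ∈ ⋂ i, Spec (9 / 10) (A i) := by
    rw [Set.mem_iInter] at *
    refine (hflat (ξ + ξ')).resolve_right fun hout => hout 0 ?_
    exact Spec_anti (show δ ≤ 9 / 10 + 9 / 10 - 1 by linarith) (A 0) (add_mem_Spec (hξ 0) (hξ' 0))
  let Λ : AddSubgroup (Fin n → ZMod 2) :=
    { carrier := ⋂ i, Spec (9 / 10) (A i)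
      add_mem' := add_mem
      zero_mem' := Set.mem_iInter.2 fun i => zero_mem_Spec (by norm_num) (A i)
      neg_mem' := fun {ξ} hξ => by rwa [ZModModule.neg_eq_self ξ] }
  exact ⟨AddSubgroup.toZModSubmodule 2 Λ, rfl⟩
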